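/- Assume [H0bis], [H1] and [H2], with H a W^{2,∞}-hypersurface. Fix (x,y), (z,w) ∈ ℝ^N × H. For each control a ∈ A₀(x,y) there exists a control ã ∈ A₀(z,w) such that |(b_H(x,y,a), l_H(x,y,a)) − (b_H(z,w,ã), l_H(z,w,ã))| ≤ C ( ω_b(|x−z|) + ω_l(|x−z|) + |y−w| ), where the constant C depends only on L̄_i, L̄_{i,l}, M_b, M_l, δ and the Lipschitz constant L_n of the normal vector n₁. -/

import Mathlib

open MeasureTheory Set Filter Metric
open scoped RealInnerProductSpace Classical NNReal

noncomputable section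

/-- Euclidean space `ℝ^N`. -/
abbrev EN (N : ℕ) : Type := EuclideanSpace ℝ (Fin N)

variable {N : ℕ} {A1 A2 : Type*}

/-- Mixed dynamics `b_H(x,y,a) = μ b₁(x,y,α₁) + (1-μ) b₂(x,y,α₂)` on the interface. -/
def bHd (b1 : EN N → EN N → A1 → EN N) (b2 : EN N → EN N → A2 → EN N)
    (x y : EN N) (a : A1 × A2 × ℝ) : EN N :=
  a.2.2 • b1 x y a.1 + (1 - a.2.2) • b2 x y a.2.1

/-- Mixed running cost `l_H(x,y,a) = μ l₁(x,y,α₁) + (1-μ) l₂(x,y,α₂)` on the interface. -/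
def lHd (l1 : EN N → EN N → A1 → ℝ) (l2 : EN N → EN N → A2 → ℝ)
    (x y : EN N) (a : A1 × A2 × ℝ) : ℝ :=
  a.2.2 * l1 x y a.1 + (1 - a.2.2) * l2 x y a.2.1

/-- Tangential controls `A₀(x,y) = {a ∈ A : b_H(x,y,a) · n₁(y) = 0}`. -/
def A0d (b1 : EN N → EN N → A1 → EN N) (b2 : EN N → EN N → A2 → EN N)
    (n1 : EN N → EN N) (x y : EN N) : Set (A1 × A2 × ℝ) :=
  {a | a.2.2 ∈ Icc (0:ℝ) 1 ∧ ⟪bHd b1 b2 x y a, n1 y⟫ = 0}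

/-- The tangential Hamiltonian `H_T(x,y,p)`, `p ∈ T_yH`. -/
def HTd (b1 : EN N → EN N → A1 → EN N) (b2 : EN N → EN N → A2 → EN N)
    (l1 : EN N → EN N → A1 → ℝ) (l2 : EN N → EN N → A2 → ℝ)
    (n1 : EN N → EN N) (x y p : EN N) : ℝ :=
  sSup ((fun a => -⟪bHd b1 b2 x y a, p⟫ - lHd l1 l2 x y a) '' A0d b1 b2 n1 x y)

set_option maxHeartbeats 2000000 in
/-- Lemma 6.1: under [H0bis], [H1] and [H2], with `H` a `W^{2,∞}`
hypersurface, every tangential control at `(x,y)` can be matched by a tangential control at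
`(z,w)` with a quantitative estimate on the corresponding mixed dynamics and costs, with a
constant depending only on the structural constants. -/
theorem stmt18 {N : ℕ} {A1 A2 : Type*} [MetricSpace A1] [CompactSpace A1]
    [MetricSpace A2] [CompactSpace A2]
    (Ω1 Ω2 Hs : Set (EN N))
    (b1 : EN N → EN N → A1 → EN N) (b2 : EN N → EN N → A2 → EN N)
    (l1 : EN N → EN N → A1 → ℝ) (l2 : EN N → EN N → A2 → ℝ)
    (n1 : EN N → EN N)
    (Mb Ml δ Ly1 Ly2 Lly1 Lly2 Ln : ℝ) (ωb ωl : ℝ → ℝ)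
    -- geometry of the partition
    (hΩ1open : IsOpen Ω1) (hΩ2open : IsOpen Ω2) (hdisj : Ω1 ∩ Ω2 = ∅)
    (hfr1 : Hs = frontier Ω1) (hfr2 : Hs = frontier Ω2) (hcover : Ω1 ∪ Ω2 ∪ Hs = univ)
    -- unit exterior normal, Lipschitz (`H` is `W^{2,∞}`)
    (hn1unit : ∀ y ∈ Hs, ‖n1 y‖ = 1)
    (hn1lip : ∀ y ∈ Hs, ∀ w ∈ Hs, ‖n1 y - n1 w‖ ≤ Ln * ‖y - w‖)
    (hn1ext : ∀ y ∈ Hs, ∀ᶠ t : ℝ in nhdsWithin 0 (Ioi 0),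
      y + t • n1 y ∈ Ω2 ∧ y - t • n1 y ∈ Ω1)
    -- [H0bis]
    (hb1cont : Continuous fun q : EN N × EN N × A1 => b1 q.1 q.2.1 q.2.2)
    (hb2cont : Continuous fun q : EN N × EN N × A2 => b2 q.1 q.2.1 q.2.2)
    (hb1bdd : ∀ x y α, ‖b1 x y α‖ ≤ Mb) (hb2bdd : ∀ x y α, ‖b2 x y α‖ ≤ Mb)
    (hωb_mono : Monotone ωb) (hωb_zero : Tendsto ωb (nhdsWithin 0 (Ioi 0)) (nhds 0))
    (hb1modx : ∀ x z y α, ‖b1 x y α - b1 z y α‖ ≤ ωb ‖x - z‖)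
    (hb2modx : ∀ x z y α, ‖b2 x y α - b2 z y α‖ ≤ ωb ‖x - z‖)
    (hb1lipy : ∀ x y w α, ‖b1 x y α - b1 x w α‖ ≤ Ly1 * ‖y - w‖)
    (hb2lipy : ∀ x y w α, ‖b2 x y α - b2 x w α‖ ≤ Ly2 * ‖y - w‖)
    -- [H1]
    (hl1cont : Continuous fun q : EN N × EN N × A1 => l1 q.1 q.2.1 q.2.2)
    (hl2cont : Continuous fun q : EN N × EN N × A2 => l2 q.1 q.2.1 q.2.2)
    (hl1bdd : ∀ x y α, |l1 x y α| ≤ Ml) (hl2bdd : ∀ x y α, |l2 x y α| ≤ Ml)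
    (hωl_mono : Monotone ωl) (hωl_zero : Tendsto ωl (nhdsWithin 0 (Ioi 0)) (nhds 0))
    (hl1modx : ∀ x z y α, |l1 x y α - l1 z y α| ≤ ωl ‖x - z‖)
    (hl2modx : ∀ x z y α, |l2 x y α - l2 z y α| ≤ ωl ‖x - z‖)
    (hl1lipy : ∀ x y w α, |l1 x y α - l1 x w α| ≤ Lly1 * ‖y - w‖)
    (hl2lipy : ∀ x y w α, |l2 x y α - l2 x w α| ≤ Lly2 * ‖y - w‖)
    -- [H2]
    (hBL1closed : ∀ x y, IsClosed (range fun α => (b1 x y α, l1 x y α)))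
    (hBL2closed : ∀ x y, IsClosed (range fun α => (b2 x y α, l2 x y α)))
    (hBL1convex : ∀ x y, Convex ℝ (range fun α => (b1 x y α, l1 x y α)))
    (hBL2convex : ∀ x y, Convex ℝ (range fun α => (b2 x y α, l2 x y α)))
    (hδpos : 0 < δ)
    (hctrl1 : ∀ x : EN N, ∀ y ∈ Hs, ∀ z : EN N, ‖z‖ ≤ δ → ∃ α, b1 x y α = z)
    (hctrl2 : ∀ x : EN N, ∀ y ∈ Hs, ∀ z : EN N, ‖z‖ ≤ δ → ∃ α, b2 x y α = z) :
    ∃ C : ℝ, 0 ≤ C ∧ ∀ (x z : EN N), ∀ y ∈ Hs, ∀ w ∈ Hs,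
      ∀ a ∈ A0d b1 b2 n1 x y, ∃ a' ∈ A0d b1 b2 n1 z w,
        ‖bHd b1 b2 x y a - bHd b1 b2 z w a'‖ ≤ C * (ωb ‖x - z‖ + ωl ‖x - z‖ + ‖y - w‖) ∧
        |lHd l1 l2 x y a - lHd l1 l2 z w a'| ≤ C * (ωb ‖x - z‖ + ωl ‖x - z‖ + ‖y - w‖) := by
    classical
  set Ly : ℝ := max Ly1 0 + max Ly2 0 with hLydef
  set Ll : ℝ := max Lly1 0 + max Lly2 0 with hLldef
  set Mb' : ℝ := max Mb 0 with hMb'def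
  set Ml' : ℝ := max Ml 0 with hMl'def
  set K1 : ℝ := Ly + Mb' * max Ln 0 with hK1def
  have hLy0 : 0 ≤ Ly := by positivity
  have hLl0 : 0 ≤ Ll := by positivity
  have hMb'0 : 0 ≤ Mb' := le_max_right _ _
  have hMl'0 : 0 ≤ Ml' := le_max_right _ _
  have hK10 : 0 ≤ K1 := by positivity
  have hq0 : 0 ≤ (δ + Mb') / δ := div_nonneg (by linarith) hδpos.le
  have hr0 : 0 ≤ 2 * Ml' / δ := div_nonneg (by linarith) hδpos.le
  refine ⟨(1 + (δ + Mb') / δ) * (2 + K1) + (2 + Ll) + (2 * Ml' / δ) * (2 + K1), by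
    have h1 : (0:ℝ) ≤ (1 + (δ + Mb') / δ) * (2 + K1) := mul_nonneg (by linarith) (by linarith)
    have h2 : (0:ℝ) ≤ (2 * Ml' / δ) * (2 + K1) := mul_nonneg hr0 (by linarith)
    linarith, ?_⟩
  intro x z y hy w hw a ha
  obtain ⟨α₁, α₂, μ⟩ := a
  obtain ⟨hμ, horth⟩ := ha
  have hμ0 : (0:ℝ) ≤ μ := hμ.1
  have hμ1 : μ ≤ 1 := hμ.2
  have hMb0 : 0 ≤ Mb := (norm_nonneg _).trans (hb1bdd x y α₁)
  have hMl0 : 0 ≤ Ml := (abs_nonneg _).trans (hl1bdd x y α₁)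
  have hMbeq : Mb' = Mb := max_eq_left hMb0
  have hMleq : Ml' = Ml := max_eq_left hMl0
  set W : ℝ := ωb ‖x - z‖ with hWdef
  set L : ℝ := ωl ‖x - z‖ with hLdef
  set D : ℝ := ‖y - w‖ with hDdef
  have hD0 : 0 ≤ D := norm_nonneg _
  have hW0 : 0 ≤ W := by
    have h0 : (0:ℝ) ≤ ωb 0 := by have := hb1modx x x y α₁; simpa using this
    exact h0.trans (hωb_mono (norm_nonneg _))
  have hL0 : 0 ≤ L := by
    have h0 : (0:ℝ) ≤ ωl 0 := by have := hl1modx x x y α₁; simpa using this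
    exact h0.trans (hωl_mono (norm_nonneg _))
  -- difference of the dynamics with the same control
  have hΔ1 : ‖b1 x y α₁ - b1 z w α₁‖ ≤ W + max Ly1 0 * D := by
    calc ‖b1 x y α₁ - b1 z w α₁‖
        = ‖(b1 x y α₁ - b1 z y α₁) + (b1 z y α₁ - b1 z w α₁)‖ := by
          rw [sub_add_sub_cancel]
      _ ≤ ‖b1 x y α₁ - b1 z y α₁‖ + ‖b1 z y α₁ - b1 z w α₁‖ := norm_add_le _ _
      _ ≤ W + max Ly1 0 * D := by
          refine add_le_add (hb1modx x z y α₁) ((hb1lipy z y w α₁).trans ?_)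
          exact mul_le_mul_of_nonneg_right (le_max_left _ _) hD0
  have hΔ2 : ‖b2 x y α₂ - b2 z w α₂‖ ≤ W + max Ly2 0 * D := by
    calc ‖b2 x y α₂ - b2 z w α₂‖
        = ‖(b2 x y α₂ - b2 z y α₂) + (b2 z y α₂ - b2 z w α₂)‖ := by
          rw [sub_add_sub_cancel]
      _ ≤ ‖b2 x y α₂ - b2 z y α₂‖ + ‖b2 z y α₂ - b2 z w α₂‖ := norm_add_le _ _
      _ ≤ W + max Ly2 0 * D := by
          refine add_le_add (hb2modx x z y α₂) ((hb2lipy z y w α₂).trans ?_)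
          exact mul_le_mul_of_nonneg_right (le_max_left _ _) hD0
  have hkeyb : bHd b1 b2 x y (α₁, α₂, μ) - bHd b1 b2 z w (α₁, α₂, μ)
      = μ • (b1 x y α₁ - b1 z w α₁) + (1 - μ) • (b2 x y α₂ - b2 z w α₂) := by
    simp only [bHd]; module
  have hbdiff : ‖bHd b1 b2 x y (α₁, α₂, μ) - bHd b1 b2 z w (α₁, α₂, μ)‖
      ≤ 2 * W + Ly * D := by
    rw [hkeyb]
    have e1 : ‖μ • (b1 x y α₁ - b1 z w α₁) + (1 - μ) • (b2 x y α₂ - b2 z w α₂)‖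
        ≤ μ * ‖b1 x y α₁ - b1 z w α₁‖ + (1 - μ) * ‖b2 x y α₂ - b2 z w α₂‖ := by
      refine (norm_add_le _ _).trans ?_
      rw [norm_smul, norm_smul, Real.norm_eq_abs, Real.norm_eq_abs,
        abs_of_nonneg hμ0, abs_of_nonneg (by linarith)]
    have n1' := norm_nonneg (b1 x y α₁ - b1 z w α₁)
    have n2' := norm_nonneg (b2 x y α₂ - b2 z w α₂)
    nlinarith [mul_nonneg hμ0 n1', mul_nonneg (sub_nonneg.2 hμ1) n2',
      mul_nonneg (sub_nonneg.2 hμ1) n1', mul_nonneg hμ0 n2']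
  -- bound on the mixed dynamics
  have hbnorm : ∀ (x' y' : EN N), ‖bHd b1 b2 x' y' (α₁, α₂, μ)‖ ≤ Mb := by
    intro x' y'
    have := norm_add_le (μ • b1 x' y' α₁) ((1 - μ) • b2 x' y' α₂)
    rw [norm_smul, norm_smul, Real.norm_eq_abs, Real.norm_eq_abs,
      abs_of_nonneg hμ0, abs_of_nonneg (by linarith)] at this
    refine this.trans ?_
    nlinarith [hb1bdd x' y' α₁, hb2bdd x' y' α₂, norm_nonneg (b1 x' y' α₁),
      norm_nonneg (b2 x' y' α₂)]
  -- the normal component of b_H(z,w,a)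
  set e : ℝ := ⟪bHd b1 b2 z w (α₁, α₂, μ), n1 w⟫ with hedef
  set E : ℝ := |e| with hEdef
  have hE0 : 0 ≤ E := abs_nonneg e
  have hden : 0 < δ + E := by linarith
  have hsplit : e = ⟪bHd b1 b2 z w (α₁, α₂, μ) - bHd b1 b2 x y (α₁, α₂, μ), n1 w⟫
      + ⟪bHd b1 b2 x y (α₁, α₂, μ), n1 w - n1 y⟫ := by
    rw [inner_sub_left, inner_sub_right, horth]; ring
  have hEbound : E ≤ 2 * W + K1 * D := by
    have h1 := abs_real_inner_le_norm
      (bHd b1 b2 z w (α₁, α₂, μ) - bHd b1 b2 x y (α₁, α₂, μ)) (n1 w)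
    have h2 := abs_real_inner_le_norm (bHd b1 b2 x y (α₁, α₂, μ)) (n1 w - n1 y)
    rw [hn1unit w hw, mul_one] at h1
    have h3 : ‖bHd b1 b2 z w (α₁, α₂, μ) - bHd b1 b2 x y (α₁, α₂, μ)‖
        ≤ 2 * W + Ly * D := by rw [norm_sub_rev]; exact hbdiff
    have h4 : ‖n1 w - n1 y‖ ≤ Ln * D := by
      rw [norm_sub_rev]; exact hn1lip y hy w hw
    have h5 : ‖n1 w - n1 y‖ ≤ max Ln 0 * D := by
      refine h4.trans (mul_le_mul_of_nonneg_right (le_max_left _ _) hD0)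
    have h6 : ‖bHd b1 b2 x y (α₁, α₂, μ)‖ * ‖n1 w - n1 y‖ ≤ Mb' * (max Ln 0 * D) := by
      rw [hMbeq]
      exact mul_le_mul (hbnorm x y) h5 (norm_nonneg _) hMb0
    have h7 := abs_add_le (⟪bHd b1 b2 z w (α₁, α₂, μ) - bHd b1 b2 x y (α₁, α₂, μ), n1 w⟫ : ℝ)
      (⟪bHd b1 b2 x y (α₁, α₂, μ), n1 w - n1 y⟫ : ℝ)
    rw [← hsplit] at h7
    rw [hEdef, hK1def]
    nlinarith [norm_nonneg (bHd b1 b2 x y (α₁, α₂, μ)), norm_nonneg (n1 w - n1 y)]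
  -- the correction vector
  set c : ℝ := if e = 0 then 0 else -(δ * e / |e|) with hcdef
  set v : EN N := c • n1 w with hvdef
  have hcabs : |c| ≤ δ := by
    rw [hcdef]
    by_cases h : e = 0
    · simp [h]; linarith
    · rw [if_neg h, abs_neg, abs_div, abs_mul, abs_of_pos hδpos, abs_abs,
        mul_div_assoc, div_self (abs_ne_zero.2 h), mul_one]
  have hvnorm : ‖v‖ ≤ δ := by
    rw [hvdef, norm_smul, Real.norm_eq_abs, hn1unit w hw, mul_one]; exact hcabs
  have hcE : δ * e + E * c = 0 := by
    rw [hcdef, hEdef]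
    by_cases h : e = 0
    · simp [h]
    · rw [if_neg h]
      have hne : |e| ≠ 0 := abs_ne_zero.2 h
      field_simp
      ring
  obtain ⟨α₁', hα₁'⟩ := hctrl1 z w hw v hvnorm
  obtain ⟨α₂', hα₂'⟩ := hctrl2 z w hw v hvnorm
  -- the convex-combination parameter
  set θ : ℝ := δ / (δ + E) with hθdef
  have hθpos : 0 < θ := div_pos hδpos hden
  have hθ1 : θ ≤ 1 := by rw [hθdef, div_le_one hden]; linarith
  have h1θ : 1 - θ = E / (δ + E) := by rw [hθdef]; field_simp; ring
  have h1θ0 : 0 ≤ 1 - θ := by linarith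
  have h1θδ : (1 - θ) * δ ≤ E := by
    rw [h1θ, div_mul_eq_mul_div, div_le_iff₀ hden]
    nlinarith
  -- construct the corrected controls via convexity
  obtain ⟨β₁, hβ₁⟩ := (hBL1convex z w) (mem_range_self α₁) (mem_range_self α₁')
    hθpos.le h1θ0 (by ring)
  obtain ⟨β₂, hβ₂⟩ := (hBL2convex z w) (mem_range_self α₂) (mem_range_self α₂')
    hθpos.le h1θ0 (by ring)
  have hβ₁b : b1 z w β₁ = θ • b1 z w α₁ + (1 - θ) • v := by
    have := congrArg Prod.fst hβ₁
    simpa [hα₁', Prod.smul_mk, Prod.mk_add_mk] using this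
  have hβ₁l : l1 z w β₁ = θ * l1 z w α₁ + (1 - θ) * l1 z w α₁' := by
    have := congrArg Prod.snd hβ₁
    simpa [Prod.smul_mk, Prod.mk_add_mk, smul_eq_mul] using this
  have hβ₂b : b2 z w β₂ = θ • b2 z w α₂ + (1 - θ) • v := by
    have := congrArg Prod.fst hβ₂
    simpa [hα₂', Prod.smul_mk, Prod.mk_add_mk] using this
  have hβ₂l : l2 z w β₂ = θ * l2 z w α₂ + (1 - θ) * l2 z w α₂' := by
    have := congrArg Prod.snd hβ₂
    simpa [Prod.smul_mk, Prod.mk_add_mk, smul_eq_mul] using this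
  refine ⟨(β₁, β₂, μ), ?_, ?_, ?_⟩
  -- the new control is tangential at (z,w)
  · have hbnew : bHd b1 b2 z w (β₁, β₂, μ)
        = θ • bHd b1 b2 z w (α₁, α₂, μ) + (1 - θ) • v := by
      simp only [bHd, hβ₁b, hβ₂b]; module
    refine ⟨hμ, ?_⟩
    rw [hbnew, inner_add_left, real_inner_smul_left, real_inner_smul_left, hvdef,
      real_inner_smul_left, real_inner_self_eq_norm_sq, hn1unit w hw, one_pow, mul_one,
      ← hedef, hθdef, h1θ]
    have hne : δ + E ≠ 0 := ne_of_gt hden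
    field_simp
    linarith [hcE]
  -- estimate on the dynamics
  · have hbnew : bHd b1 b2 z w (β₁, β₂, μ)
        = θ • bHd b1 b2 z w (α₁, α₂, μ) + (1 - θ) • v := by
      simp only [bHd, hβ₁b, hβ₂b]; module
    have hd : bHd b1 b2 z w (β₁, β₂, μ) - bHd b1 b2 z w (α₁, α₂, μ)
        = (1 - θ) • (v - bHd b1 b2 z w (α₁, α₂, μ)) := by
      rw [hbnew]; module
    have hstep : ‖bHd b1 b2 z w (β₁, β₂, μ) - bHd b1 b2 z w (α₁, α₂, μ)‖
        ≤ (1 - θ) * (δ + Mb) := by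
      rw [hd, norm_smul, Real.norm_eq_abs, abs_of_nonneg h1θ0]
      refine mul_le_mul_of_nonneg_left ?_ h1θ0
      exact (norm_sub_le _ _).trans (add_le_add hvnorm (hbnorm z w))
    -- (1-θ)*(δ+Mb) ≤ (δ+Mb')/δ * E
    have hQE : (1 - θ) * (δ + Mb) ≤ (δ + Mb') / δ * E := by
      rw [hMbeq, div_mul_eq_mul_div, le_div_iff₀ hδpos]
      have := mul_le_mul_of_nonneg_left h1θδ (by linarith : (0:ℝ) ≤ δ + Mb)
      linarith only [this]
    have htri : ‖bHd b1 b2 x y (α₁, α₂, μ) - bHd b1 b2 z w (β₁, β₂, μ)‖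
        ≤ ‖bHd b1 b2 x y (α₁, α₂, μ) - bHd b1 b2 z w (α₁, α₂, μ)‖
          + ‖bHd b1 b2 z w (β₁, β₂, μ) - bHd b1 b2 z w (α₁, α₂, μ)‖ := by
      have h := norm_sub_le (bHd b1 b2 x y (α₁, α₂, μ) - bHd b1 b2 z w (α₁, α₂, μ))
        (bHd b1 b2 z w (β₁, β₂, μ) - bHd b1 b2 z w (α₁, α₂, μ))
      have h2 : (bHd b1 b2 x y (α₁, α₂, μ) - bHd b1 b2 z w (α₁, α₂, μ))
          - (bHd b1 b2 z w (β₁, β₂, μ) - bHd b1 b2 z w (α₁, α₂, μ))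
          = bHd b1 b2 x y (α₁, α₂, μ) - bHd b1 b2 z w (β₁, β₂, μ) := by abel
      rwa [h2] at h
    have hEq : (δ + Mb') / δ * E ≤ (δ + Mb') / δ * (2 * W + K1 * D) :=
      mul_le_mul_of_nonneg_left hEbound hq0
    have hS0 : (0:ℝ) ≤ W + L + D := by linarith
    have hLyK : Ly * D ≤ K1 * D := by
      refine mul_le_mul_of_nonneg_right ?_ hD0
      rw [hK1def]; linarith only [mul_nonneg hMb'0 (le_max_right Ln 0)]
    have hfin : 2 * W + K1 * D ≤ (2 + K1) * (W + L + D) := by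
      have c1 : (0:ℝ) ≤ K1 * W := mul_nonneg hK10 hW0
      have c2 : (0:ℝ) ≤ K1 * L := mul_nonneg hK10 hL0
      have cr : (2 + K1) * (W + L + D) = 2 * W + K1 * D + (2 * L + 2 * D + K1 * W + K1 * L) := by
        ring
      linarith only [c1, c2, cr, hD0, hL0]
    have hqP : (δ + Mb') / δ * (2 * W + K1 * D)
        ≤ (δ + Mb') / δ * ((2 + K1) * (W + L + D)) :=
      mul_le_mul_of_nonneg_left hfin hq0
    have hBS : (0:ℝ) ≤ (2 + Ll) * (W + L + D) := mul_nonneg (by linarith) hS0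
    have hGS : (0:ℝ) ≤ (2 * Ml' / δ) * ((2 + K1) * (W + L + D)) :=
      mul_nonneg hr0 (mul_nonneg (by linarith) hS0)
    have hring : ((1 + (δ + Mb') / δ) * (2 + K1) + (2 + Ll) + (2 * Ml' / δ) * (2 + K1))
          * (W + L + D)
        = (2 + K1) * (W + L + D) + (δ + Mb') / δ * ((2 + K1) * (W + L + D))
          + (2 + Ll) * (W + L + D) + (2 * Ml' / δ) * ((2 + K1) * (W + L + D)) := by ring
    rw [hring]
    calc ‖bHd b1 b2 x y (α₁, α₂, μ) - bHd b1 b2 z w (β₁, β₂, μ)‖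
        ≤ ‖bHd b1 b2 x y (α₁, α₂, μ) - bHd b1 b2 z w (α₁, α₂, μ)‖
          + ‖bHd b1 b2 z w (β₁, β₂, μ) - bHd b1 b2 z w (α₁, α₂, μ)‖ := htri
      _ ≤ (2 * W + Ly * D) + (1 - θ) * (δ + Mb) := add_le_add hbdiff hstep
      _ ≤ (2 * W + K1 * D) + (δ + Mb') / δ * (2 * W + K1 * D) :=
          add_le_add (add_le_add le_rfl hLyK) (hQE.trans hEq)
      _ ≤ (2 + K1) * (W + L + D) + (δ + Mb') / δ * ((2 + K1) * (W + L + D)) :=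
          add_le_add hfin hqP
      _ ≤ (2 + K1) * (W + L + D) + (δ + Mb') / δ * ((2 + K1) * (W + L + D))
          + (2 + Ll) * (W + L + D) + (2 * Ml' / δ) * ((2 + K1) * (W + L + D)) :=
          (le_add_of_nonneg_right hBS).trans (le_add_of_nonneg_right hGS)
  -- estimate on the costs
  · have hΛ1 : |l1 x y α₁ - l1 z w α₁| ≤ L + max Lly1 0 * D := by
      calc |l1 x y α₁ - l1 z w α₁|
          = |(l1 x y α₁ - l1 z y α₁) + (l1 z y α₁ - l1 z w α₁)| := by ring_nf
        _ ≤ |l1 x y α₁ - l1 z y α₁| + |l1 z y α₁ - l1 z w α₁| := abs_add_le _ _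
        _ ≤ L + max Lly1 0 * D := by
            refine add_le_add (hl1modx x z y α₁) ((hl1lipy z y w α₁).trans ?_)
            exact mul_le_mul_of_nonneg_right (le_max_left _ _) hD0
    have hΛ2 : |l2 x y α₂ - l2 z w α₂| ≤ L + max Lly2 0 * D := by
      calc |l2 x y α₂ - l2 z w α₂|
          = |(l2 x y α₂ - l2 z y α₂) + (l2 z y α₂ - l2 z w α₂)| := by ring_nf
        _ ≤ |l2 x y α₂ - l2 z y α₂| + |l2 z y α₂ - l2 z w α₂| := abs_add_le _ _
        _ ≤ L + max Lly2 0 * D := by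
            refine add_le_add (hl2modx x z y α₂) ((hl2lipy z y w α₂).trans ?_)
            exact mul_le_mul_of_nonneg_right (le_max_left _ _) hD0
    have hldiff : |lHd l1 l2 x y (α₁, α₂, μ) - lHd l1 l2 z w (α₁, α₂, μ)|
        ≤ 2 * L + Ll * D := by
      have hkey : lHd l1 l2 x y (α₁, α₂, μ) - lHd l1 l2 z w (α₁, α₂, μ)
          = μ * (l1 x y α₁ - l1 z w α₁) + (1 - μ) * (l2 x y α₂ - l2 z w α₂) := by
        simp only [lHd]; ring
      rw [hkey]
      have e1 := abs_add_le (μ * (l1 x y α₁ - l1 z w α₁))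
        ((1 - μ) * (l2 x y α₂ - l2 z w α₂))
      rw [abs_mul, abs_mul, abs_of_nonneg hμ0, abs_of_nonneg (by linarith : (0:ℝ) ≤ 1 - μ)]
        at e1
      have n1' := abs_nonneg (l1 x y α₁ - l1 z w α₁)
      have n2' := abs_nonneg (l2 x y α₂ - l2 z w α₂)
      have a1 : μ * |l1 x y α₁ - l1 z w α₁| ≤ 1 * |l1 x y α₁ - l1 z w α₁| :=
        mul_le_mul_of_nonneg_right hμ1 n1'
      have a2 : (1 - μ) * |l2 x y α₂ - l2 z w α₂| ≤ 1 * |l2 x y α₂ - l2 z w α₂| :=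
        mul_le_mul_of_nonneg_right (by linarith) n2'
      have hLlD : Ll * D = max Lly1 0 * D + max Lly2 0 * D := by rw [hLldef]; ring
      linarith only [e1, a1, a2, hΛ1, hΛ2, hLlD]
    have hlmix : ∀ (p q : ℝ), |p| ≤ Ml → |q| ≤ Ml → |μ * p + (1 - μ) * q| ≤ Ml := by
      intro p q hp hq
      have e1 := abs_add_le (μ * p) ((1 - μ) * q)
      rw [abs_mul, abs_mul, abs_of_nonneg hμ0, abs_of_nonneg (by linarith : (0:ℝ) ≤ 1 - μ)]
        at e1
      have a1 : μ * |p| ≤ μ * Ml := mul_le_mul_of_nonneg_left hp hμ0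
      have a2 : (1 - μ) * |q| ≤ (1 - μ) * Ml := mul_le_mul_of_nonneg_left hq (by linarith)
      linarith only [e1, a1, a2]
    have hlbd : ∀ (x' y' : EN N), |lHd l1 l2 x' y' (α₁, α₂, μ)| ≤ Ml := fun x' y' =>
      hlmix _ _ (hl1bdd x' y' α₁) (hl2bdd x' y' α₂)
    have hlnew : lHd l1 l2 z w (β₁, β₂, μ) - lHd l1 l2 z w (α₁, α₂, μ)
        = (1 - θ) * ((μ * l1 z w α₁' + (1 - μ) * l2 z w α₂')
          - lHd l1 l2 z w (α₁, α₂, μ)) := by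
      simp only [lHd, hβ₁l, hβ₂l]; ring
    have hlstep : |lHd l1 l2 z w (β₁, β₂, μ) - lHd l1 l2 z w (α₁, α₂, μ)|
        ≤ (1 - θ) * (2 * Ml) := by
      rw [hlnew, abs_mul, abs_of_nonneg h1θ0]
      refine mul_le_mul_of_nonneg_left ?_ h1θ0
      have h1 := hlmix _ _ (hl1bdd z w α₁') (hl2bdd z w α₂')
      have h2 := hlbd z w
      calc |(μ * l1 z w α₁' + (1 - μ) * l2 z w α₂') - lHd l1 l2 z w (α₁, α₂, μ)|
          ≤ |μ * l1 z w α₁' + (1 - μ) * l2 z w α₂'| + |lHd l1 l2 z w (α₁, α₂, μ)| :=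
            abs_sub _ _
        _ ≤ 2 * Ml := by linarith
    have hQE : (1 - θ) * (2 * Ml) ≤ 2 * Ml' / δ * E := by
      rw [hMleq, div_mul_eq_mul_div, le_div_iff₀ hδpos]
      have := mul_le_mul_of_nonneg_left h1θδ (by linarith : (0:ℝ) ≤ 2 * Ml)
      linarith only [this]
    have htri : |lHd l1 l2 x y (α₁, α₂, μ) - lHd l1 l2 z w (β₁, β₂, μ)|
        ≤ |lHd l1 l2 x y (α₁, α₂, μ) - lHd l1 l2 z w (α₁, α₂, μ)|
          + |lHd l1 l2 z w (β₁, β₂, μ) - lHd l1 l2 z w (α₁, α₂, μ)| := by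
      have h := abs_sub (lHd l1 l2 x y (α₁, α₂, μ) - lHd l1 l2 z w (α₁, α₂, μ))
        (lHd l1 l2 z w (β₁, β₂, μ) - lHd l1 l2 z w (α₁, α₂, μ))
      have h2 : (lHd l1 l2 x y (α₁, α₂, μ) - lHd l1 l2 z w (α₁, α₂, μ))
          - (lHd l1 l2 z w (β₁, β₂, μ) - lHd l1 l2 z w (α₁, α₂, μ))
          = lHd l1 l2 x y (α₁, α₂, μ) - lHd l1 l2 z w (β₁, β₂, μ) := by ring
      rwa [h2] at h
    have hEq : 2 * Ml' / δ * E ≤ 2 * Ml' / δ * (2 * W + K1 * D) :=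
      mul_le_mul_of_nonneg_left hEbound hr0
    have hS0 : (0:ℝ) ≤ W + L + D := by linarith
    have hfin : 2 * W + K1 * D ≤ (2 + K1) * (W + L + D) := by
      have c1 : (0:ℝ) ≤ K1 * W := mul_nonneg hK10 hW0
      have c2 : (0:ℝ) ≤ K1 * L := mul_nonneg hK10 hL0
      have cr : (2 + K1) * (W + L + D) = 2 * W + K1 * D + (2 * L + 2 * D + K1 * W + K1 * L) := by
        ring
      linarith only [c1, c2, cr, hD0, hL0]
    have hfin2 : 2 * L + Ll * D ≤ (2 + Ll) * (W + L + D) := by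
      have c1 : (0:ℝ) ≤ Ll * W := mul_nonneg hLl0 hW0
      have c2 : (0:ℝ) ≤ Ll * L := mul_nonneg hLl0 hL0
      have cr : (2 + Ll) * (W + L + D) = 2 * L + Ll * D + (2 * W + 2 * D + Ll * W + Ll * L) := by
        ring
      linarith only [c1, c2, cr, hD0, hW0]
    have hrP : 2 * Ml' / δ * (2 * W + K1 * D)
        ≤ 2 * Ml' / δ * ((2 + K1) * (W + L + D)) :=
      mul_le_mul_of_nonneg_left hfin hr0
    have hAS : (0:ℝ) ≤ (2 + K1) * (W + L + D) + (δ + Mb') / δ * ((2 + K1) * (W + L + D)) :=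
      add_nonneg (mul_nonneg (by linarith : (0:ℝ) ≤ 2 + K1) hS0)
        (mul_nonneg hq0 (mul_nonneg (by linarith : (0:ℝ) ≤ 2 + K1) hS0))
    have hring : ((1 + (δ + Mb') / δ) * (2 + K1) + (2 + Ll) + (2 * Ml' / δ) * (2 + K1))
          * (W + L + D)
        = (2 + Ll) * (W + L + D) + 2 * Ml' / δ * ((2 + K1) * (W + L + D))
          + ((2 + K1) * (W + L + D) + (δ + Mb') / δ * ((2 + K1) * (W + L + D))) := by ring
    rw [hring]
    calc |lHd l1 l2 x y (α₁, α₂, μ) - lHd l1 l2 z w (β₁, β₂, μ)|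
        ≤ |lHd l1 l2 x y (α₁, α₂, μ) - lHd l1 l2 z w (α₁, α₂, μ)|
          + |lHd l1 l2 z w (β₁, β₂, μ) - lHd l1 l2 z w (α₁, α₂, μ)| := htri
      _ ≤ (2 * L + Ll * D) + (1 - θ) * (2 * Ml) := add_le_add hldiff hlstep
      _ ≤ (2 + Ll) * (W + L + D) + 2 * Ml' / δ * ((2 + K1) * (W + L + D)) :=
          add_le_add hfin2 ((hQE.trans hEq).trans hrP)
      _ ≤ (2 + Ll) * (W + L + D) + 2 * Ml' / δ * ((2 + K1) * (W + L + D))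
          + ((2 + K1) * (W + L + D) + (δ + Mb') / δ * ((2 + K1) * (W + L + D))) :=
          le_add_of_nonneg_right hAS
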